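/- (Splitting lemma) Let A be a commutative group, X a commutative partial monoid, i : A → X injective with free action l_A, and let i(A) ⊆ C ⊆ X be a (total) submonoid with trivialisation φ : C → A × C/A. Then the following are equivalent: (1) there exists a left splitting s : X → A with s|_C = proj₁ ∘ φ; (2) there exists a right splitting h : X/A → X with h|_{C/A} = φ⁻¹ ∘ in₂; (3) there exists a trivialisation φ' : X → A × X/A with φ'|_C = φ. -/

import Mathlib

/-- A commutative partial monoid: addition is partially defined (via `Option`),
commutative, unital, and associative where defined. -/
structure PCM (X : Type*) where
  add : X → X → Option X
  zero : X
  comm : ∀ x y, add x y = add y x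
  zero_add : ∀ x, add zero x = some x
  assoc : ∀ x y z xy yz, add x y = some xy → add y z = some yz →
    add xy z = add x yz

/-- Homomorphism of commutative partial monoids. -/
def PCM.IsHom {X Y : Type*} (MX : PCM X) (MY : PCM Y) (f : X → Y) : Prop :=
  f MX.zero = MY.zero ∧
  ∀ x y z, MX.add x y = some z → MY.add (f x) (f y) = some (f z)

/-- `i : A → X` is an injective homomorphism of the group `A` into the
partial monoid `X` such that `i a + x` is always defined. -/
structure EmbedData {A X : Type*} [AddCommGroup A] (MX : PCM X) (i : A → X) : Prop where
  inj : Function.Injective i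
  map_zero : i 0 = MX.zero
  map_add : ∀ a b, MX.add (i a) (i b) = some (i (a + b))
  total : ∀ a x, (MX.add (i a) x).isSome

/-- The action `l_A : (a, x) ↦ i a + x` is free. -/
def FreeAction {A X : Type*} [AddCommGroup A] (MX : PCM X) (i : A → X) : Prop :=
  ∀ a a' x y, MX.add (i a) x = some y → MX.add (i a') x = some y → a = a'

/-- `π : X → Q` presents `Q` as the orbit space `X/A` of the action of `A` on `X`
via `i`, with the induced partial monoid structure. -/
structure QuotData {A X Q : Type*} [AddCommGroup A] (MX : PCM X) (MQ : PCM Q)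
    (i : A → X) (π : X → Q) : Prop where
  surj : Function.Surjective π
  orbit : ∀ x y, π x = π y ↔ ∃ a, MX.add (i a) x = some y
  hom : MX.IsHom MQ π
  lift : ∀ x y q, MQ.add (π x) (π y) = some q → (MX.add x y).isSome

/-- A left splitting of `A → X → X/A`: a homomorphism `s : X → A` with `s ∘ i = id`. -/
def IsLeftSplit {A X : Type*} [AddCommGroup A] (MX : PCM X) (i : A → X) (s : X → A) : Prop :=
  s MX.zero = 0 ∧
  (∀ x y z, MX.add x y = some z → s z = s x + s y) ∧
  (∀ a, s (i a) = a)

/-- A right splitting of `A → X → X/A`: a homomorphism `h : X/A → X` with `π ∘ h = id`. -/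
def IsRightSplit {X Q : Type*} (MX : PCM X) (MQ : PCM Q)
    (π : X → Q) (h : Q → X) : Prop :=
  MQ.IsHom MX h ∧ ∀ q, π (h q) = q

/-- A trivialisation `φ : X → A × X/A`: a homomorphism (into the product
partial monoid) with `φ ∘ i = in₁` and `proj₂ ∘ φ = π`. -/
def IsTriv {A X Q : Type*} [AddCommGroup A] (MX : PCM X) (MQ : PCM Q)
    (i : A → X) (π : X → Q) (φ : X → A × Q) : Prop :=
  φ MX.zero = (0, MQ.zero) ∧
  (∀ x y z, MX.add x y = some z →
    MQ.add (φ x).2 (φ y).2 = some (φ z).2 ∧ (φ z).1 = (φ x).1 + (φ y).1) ∧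
  (∀ a, φ (i a) = (a, MQ.zero)) ∧
  (∀ x, (φ x).2 = π x)

/-- A local trivialisation `φ : C → A × C/A` of the restriction of the sequence
to a submonoid `i(A) ⊆ C ⊆ X` (presented as a function on all of `X` whose
values off `C` are irrelevant). -/
def IsLocalTriv {A X Q : Type*} [AddCommGroup A] (MX : PCM X) (MQ : PCM Q)
    (i : A → X) (π : X → Q) (C : Set X) (φ : X → A × Q) : Prop :=
  (∀ x y z, x ∈ C → y ∈ C → MX.add x y = some z →
    MQ.add (φ x).2 (φ y).2 = some (φ z).2 ∧ (φ z).1 = (φ x).1 + (φ y).1) ∧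
  (∀ a, φ (i a) = (a, MQ.zero)) ∧
  (∀ x, x ∈ C → (φ x).2 = π x)

/-- `C` is a total submonoid of the partial monoid `X` containing `i(A)`. -/
def IsSubPCM {A X : Type*} [AddCommGroup A] (MX : PCM X) (i : A → X) (C : Set X) : Prop :=
  MX.zero ∈ C ∧
  (∀ a, i a ∈ C) ∧
  (∀ x y, x ∈ C → y ∈ C → (MX.add x y).isSome) ∧
  (∀ x y z, x ∈ C → y ∈ C → MX.add x y = some z → z ∈ C)

/-! A trivialisation `φ'` is the same thing as a left splitting `s`, namely its first coordinate,
paired with `π`. A right splitting `h` writes every `x` as `i a + h (π x)`, with `a` unique by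
freeness; `x ↦ (a, π x)` is then a trivialisation. Conversely a trivialisation is injective, and
`q ↦ φ'⁻¹ (0, q)` is a right splitting. -/

section Splitting

variable {A X Q : Type*} [AddCommGroup A] {MX : PCM X} {MQ : PCM Q} {i : A → X} {π : X → Q}

theorem PCM.add_zero (M : PCM X) (x : X) : M.add x M.zero = some x :=
  (M.comm _ _).trans (M.zero_add x)

theorem EmbedData.neg_add_eq_of_add_eq (hemb : EmbedData MX i) {a : A} {x y : X}
    (h : MX.add (i a) x = some y) : MX.add (i (-a)) y = some x := by
  have h' := MX.assoc (i (-a)) (i a) x (i (-a + a)) y (hemb.map_add _ _) h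
  rw [neg_add_cancel, hemb.map_zero, MX.zero_add] at h'
  exact h'.symm

theorem EmbedData.add_eq_of_add_eq (hemb : EmbedData MX i) {a b : A} {u v w x y z : X}
    (hx : MX.add (i a) u = some x) (hy : MX.add (i b) v = some y)
    (hw : MX.add u v = some w) (hz : MX.add x y = some z) :
    MX.add (i (a + b)) w = some z := by
  obtain ⟨t, ht⟩ := Option.isSome_iff_exists.mp (hemb.total b w)
  have hyu : MX.add y u = some t :=
    (MX.assoc (i b) v u y w hy ((MX.comm v u).trans hw)).trans ht
  have hat : MX.add (i a) t = some z :=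
    (MX.assoc (i a) u y x t hx ((MX.comm u y).trans hyu)).symm.trans hz
  exact (MX.assoc (i a) (i b) w (i (a + b)) t (hemb.map_add a b) ht).trans hat

theorem QuotData.map_embed (hquot : QuotData MX MQ i π) (hemb : EmbedData MX i) (a : A) :
    π (i a) = MQ.zero := by
  have h : π (i a) = π MX.zero :=
    (hquot.orbit _ _).mpr ⟨-a, by rw [hemb.map_add, neg_add_cancel, hemb.map_zero]⟩
  rw [h, hquot.hom.1]

theorem IsLeftSplit.isTriv_prod (hemb : EmbedData MX i) (hquot : QuotData MX MQ i π)
    {s : X → A} (hs : IsLeftSplit MX i s) : IsTriv MX MQ i π (fun x => (s x, π x)) :=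
  ⟨Prod.ext hs.1 hquot.hom.1,
    fun x y z h => ⟨hquot.hom.2 x y z h, hs.2.1 x y z h⟩,
    fun a => Prod.ext (hs.2.2 a) (hquot.map_embed hemb a),
    fun _ => rfl⟩

theorem IsTriv.isLeftSplit_fst {φ' : X → A × Q} (ht : IsTriv MX MQ i π φ') :
    IsLeftSplit MX i (fun x => (φ' x).1) :=
  ⟨congrArg Prod.fst ht.1, fun x y z h => (ht.2.1 x y z h).2,
    fun a => congrArg Prod.fst (ht.2.2.1 a)⟩

theorem IsRightSplit.isTriv (hemb : EmbedData MX i) (hquot : QuotData MX MQ i π)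
    (hfree : FreeAction MX i) {h : Q → X} (hh : IsRightSplit MX MQ π h) {α : X → A}
    (hα : ∀ x, MX.add (i (α x)) (h (π x)) = some x) :
    IsTriv MX MQ i π (fun x => (α x, π x)) := by
  have huniq : ∀ x a, MX.add (i a) (h (π x)) = some x → α x = a :=
    fun x a ha => hfree _ _ _ _ (hα x) ha
  refine ⟨Prod.ext ?_ hquot.hom.1, fun x y z hz => ⟨hquot.hom.2 x y z hz, ?_⟩,
    fun a => Prod.ext ?_ (hquot.map_embed hemb a), fun _ => rfl⟩
  · exact huniq _ 0 (by rw [hquot.hom.1, hh.1.1, hemb.map_zero, MX.zero_add])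
  · exact huniq z _ (hemb.add_eq_of_add_eq (hα x) (hα y)
      (hh.1.2 _ _ _ (hquot.hom.2 x y z hz)) hz)
  · exact huniq _ a (by rw [hquot.map_embed hemb, hh.1.1, MX.add_zero])

theorem IsTriv.injective (hemb : EmbedData MX i) (hquot : QuotData MX MQ i π)
    {φ' : X → A × Q} (ht : IsTriv MX MQ i π φ') : Function.Injective φ' := by
  intro x y hxy
  obtain ⟨a, ha⟩ := (hquot.orbit x y).mp (by rw [← ht.2.2.2 x, ← ht.2.2.2 y, hxy])
  have hfst : (φ' y).1 = a + (φ' y).1 := by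
    have h := (ht.2.1 (i a) x y ha).2
    rwa [ht.2.2.1 a, hxy] at h
  rw [right_eq_add.mp hfst, hemb.map_zero, MX.zero_add] at ha
  exact Option.some.inj ha

theorem IsTriv.exists_neg_add_eq (hemb : EmbedData MX i) {φ' : X → A × Q}
    (ht : IsTriv MX MQ i π φ') (x : X) :
    ∃ w, MX.add (i (-(φ' x).1)) x = some w ∧ φ' w = (0, π x) := by
  obtain ⟨w, hw⟩ := Option.isSome_iff_exists.mp (hemb.total (-(φ' x).1) x)
  obtain ⟨hsnd, hfst⟩ := ht.2.1 _ _ _ hw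
  rw [ht.2.2.1, MQ.zero_add] at hsnd
  rw [ht.2.2.1, neg_add_cancel] at hfst
  exact ⟨w, hw, Prod.ext hfst ((Option.some.inj hsnd).symm.trans (ht.2.2.2 x))⟩

theorem IsTriv.exists_apply_eq_zero_prod (hemb : EmbedData MX i) (hquot : QuotData MX MQ i π)
    {φ' : X → A × Q} (ht : IsTriv MX MQ i π φ') (q : Q) : ∃ w, φ' w = (0, q) := by
  obtain ⟨x, rfl⟩ := hquot.surj q
  obtain ⟨w, -, hw⟩ := ht.exists_neg_add_eq hemb x
  exact ⟨w, hw⟩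

theorem IsTriv.isRightSplit (hemb : EmbedData MX i) (hquot : QuotData MX MQ i π)
    {φ' : X → A × Q} {h : Q → X} (ht : IsTriv MX MQ i π φ')
    (hh : ∀ q, φ' (h q) = (0, q)) : IsRightSplit MX MQ π h := by
  have hπh : ∀ q, π (h q) = q := fun q => by rw [← ht.2.2.2, hh]
  refine ⟨⟨ht.injective hemb hquot (by rw [hh, ht.1]), fun q q' r hr => ?_⟩, hπh⟩
  obtain ⟨z, hz⟩ := Option.isSome_iff_exists.mp
    (hquot.lift (h q) (h q') r (by rw [hπh, hπh]; exact hr))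
  obtain ⟨hsnd, hfst⟩ := ht.2.1 _ _ _ hz
  rw [hh, hh, hr] at hsnd
  rw [hh, hh, add_zero] at hfst
  have hzr : z = h r := ht.injective hemb hquot <|
    (hh r).symm ▸ Prod.ext hfst (Option.some.inj hsnd).symm
  exact hzr ▸ hz

theorem IsTriv.add_neg_fst_eq (hemb : EmbedData MX i) (hquot : QuotData MX MQ i π)
    {φ' : X → A × Q} {h : Q → X} (ht : IsTriv MX MQ i π φ') (hh : ∀ q, φ' (h q) = (0, q))
    (x : X) :
    MX.add x (i (-(φ' x).1)) = some (h (π x)) := by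
  obtain ⟨w, hw, hw0⟩ := ht.exists_neg_add_eq hemb x
  rw [MX.comm, ← ht.injective hemb hquot (hw0.trans (hh (π x)).symm)]
  exact hw

end Splitting

theorem splitting_lemma_general {A X Q : Type*} [AddCommGroup A]
    (MX : PCM X) (MQ : PCM Q) (i : A → X) (π : X → Q)
    (hemb : EmbedData MX i) (hquot : QuotData MX MQ i π)
    (hfree : FreeAction MX i)
    (C : Set X)
    (φ : X → A × Q) (hφ : IsLocalTriv MX MQ i π C φ) :
    ((∃ s : X → A, IsLeftSplit MX i s ∧ ∀ x ∈ C, s x = (φ x).1) ↔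
      (∃ φ' : X → A × Q, IsTriv MX MQ i π φ' ∧ ∀ x ∈ C, φ' x = φ x)) ∧
    ((∃ h : Q → X, IsRightSplit MX MQ π h ∧
        ∀ x ∈ C, MX.add x (i (-(φ x).1)) = some (h (π x))) ↔
      (∃ φ' : X → A × Q, IsTriv MX MQ i π φ' ∧ ∀ x ∈ C, φ' x = φ x)) := by
  refine ⟨⟨?_, ?_⟩, ⟨?_, ?_⟩⟩
  · rintro ⟨s, hs, hsC⟩
    exact ⟨_, hs.isTriv_prod hemb hquot, fun x hx => Prod.ext (hsC x hx) (hφ.2.2 x hx).symm⟩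
  · rintro ⟨φ', ht, htC⟩
    exact ⟨_, ht.isLeftSplit_fst, fun x hx => by rw [htC x hx]⟩
  · rintro ⟨h, hh, hhC⟩
    choose α hα using fun x => (hquot.orbit (h (π x)) x).mp (hh.2 (π x))
    refine ⟨_, hh.isTriv hemb hquot hfree hα, fun x hx => Prod.ext ?_ (hφ.2.2 x hx).symm⟩
    have hx' := hemb.neg_add_eq_of_add_eq ((MX.comm _ _).trans (hhC x hx))
    rw [neg_neg] at hx'
    exact hfree _ _ _ _ (hα x) hx'
  · rintro ⟨φ', ht, htC⟩
    choose h hh using ht.exists_apply_eq_zero_prod hemb hquot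
    exact ⟨h, ht.isRightSplit hemb hquot hh,
      fun x hx => htC x hx ▸ ht.add_neg_fst_eq hemb hquot hh x⟩

/-- The splitting lemma (Lemma 3.2): for a free action, a total submonoid
`i(A) ⊆ C ⊆ X` and a local trivialisation `φ : C → A × C/A`, the following
are equivalent:
(1) there is a left splitting `s : X → A` with `s|_C = proj₁ ∘ φ`;
(2) there is a right splitting `h : X/A → X` with `h|_{C/A} = φ⁻¹ ∘ in₂`
    (i.e. `h(π x) = x − i((φ x).1)` for `x ∈ C`);
(3) there is a trivialisation `φ' : X → A × X/A` with `φ'|_C = φ`. -/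
theorem splitting_lemma {A X Q : Type*} [AddCommGroup A]
    (MX : PCM X) (MQ : PCM Q) (i : A → X) (π : X → Q)
    (hemb : EmbedData MX i) (hquot : QuotData MX MQ i π)
    (hfree : FreeAction MX i)
    (C : Set X) (hC : IsSubPCM MX i C)
    (φ : X → A × Q) (hφ : IsLocalTriv MX MQ i π C φ) :
    ((∃ s : X → A, IsLeftSplit MX i s ∧ ∀ x ∈ C, s x = (φ x).1) ↔
      (∃ φ' : X → A × Q, IsTriv MX MQ i π φ' ∧ ∀ x ∈ C, φ' x = φ x)) ∧
    ((∃ h : Q → X, IsRightSplit MX MQ π h ∧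
        ∀ x ∈ C, MX.add x (i (-(φ x).1)) = some (h (π x))) ↔
      (∃ φ' : X → A × Q, IsTriv MX MQ i π φ' ∧ ∀ x ∈ C, φ' x = φ x)) :=
  splitting_lemma_general MX MQ i π hemb hquot hfree C φ hφ
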